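/- For the symmetric gated auto-encoder with tied inputs and weights (covariance auto-encoder): r(x) = (W^F)^T((W^F x) ⊙ (W^H)^T σ(W^H((W^F x)²) + b)) + a, the vector field F(x) = r(x) - x is the gradient of E(x) = (1/2)Σ_k log(1 + exp((W^H(W^F x)²)_k + b_k)) - ‖x‖²/2 + a·x. -/

import Mathlib

/-!
`E` is a sum of three terms. The linear term `a ⬝ᵥ x` contributes `a` and `‖x‖²/2` contributes
`x`. The softplus term is `φ (Wᶠ x)` with `φ u = ½ Σₖ log (1 + exp ((Wʰ u²)ₖ + bₖ))`; since
`(log (1 + eᵗ))' = σ t` and `∇ (Wʰ u²)ₖ = 2 Wʰₖ ⊙ u`, the factor `2` cancels the `½` and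
`∇φ u = u ⊙ (Wʰ)ᵀ σ (Wʰ u² + b)`. The chain rule through the linear map `Wᶠ` applies its
adjoint `(Wᶠ)ᵀ` to this gradient, which gives `r x - a`.
-/

noncomputable def sigmoid (t : ℝ) : ℝ := (1 + Real.exp (-t))⁻¹

open InnerProductSpace Matrix

section GradientCalculus

variable {F : Type*} [NormedAddCommGroup F] [InnerProductSpace ℝ F] [CompleteSpace F]
  {f g : F → ℝ} {f' g' x : F}

theorem HasGradientAt.add (hf : HasGradientAt f f' x) (hg : HasGradientAt g g' x) :
    HasGradientAt (fun y => f y + g y) (f' + g') x := by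
  rw [hasGradientAt_iff_hasFDerivAt] at *
  exact (hf.fun_add hg).congr_fderiv (map_add _ _ _).symm

theorem HasGradientAt.sub (hf : HasGradientAt f f' x) (hg : HasGradientAt g g' x) :
    HasGradientAt (fun y => f y - g y) (f' - g') x := by
  rw [hasGradientAt_iff_hasFDerivAt] at *
  exact (hf.fun_sub hg).congr_fderiv (map_sub _ _ _).symm

theorem HasGradientAt.const_mul (c : ℝ) (hf : HasGradientAt f f' x) :
    HasGradientAt (fun y => c * f y) (c • f') x := by
  rw [hasGradientAt_iff_hasFDerivAt] at *
  exact (hf.const_mul c).congr_fderiv (map_smul _ _ _).symm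

theorem HasGradientAt.sum {ι : Type*} {s : Finset ι} {f : ι → F → ℝ} {f' : ι → F}
    (hf : ∀ i ∈ s, HasGradientAt (f i) (f' i) x) :
    HasGradientAt (fun y => ∑ i ∈ s, f i y) (∑ i ∈ s, f' i) x := by
  simp only [hasGradientAt_iff_hasFDerivAt, map_sum] at *
  exact HasFDerivAt.fun_sum hf

theorem HasDerivAt.comp_hasGradientAt {φ : ℝ → ℝ} {φ' : ℝ} (x : F)
    (hφ : HasDerivAt φ φ' (f x)) (hf : HasGradientAt f f' x) :
    HasGradientAt (fun y => φ (f y)) (φ' • f') x := by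
  rw [hasGradientAt_iff_hasFDerivAt] at *
  refine (hφ.comp_hasFDerivAt x hf).congr_fderiv ?_
  ext v
  simp

theorem hasGradientAt_inner_right (a x : F) : HasGradientAt (fun y => ⟪a, y⟫_ℝ) a x := by
  rw [hasGradientAt_iff_hasFDerivAt]
  exact (toDual ℝ F a).hasFDerivAt

theorem hasGradientAt_norm_sq (x : F) :
    HasGradientAt (fun y => ‖y‖ ^ 2) ((2 : ℝ) • x) x := by
  rw [hasGradientAt_iff_hasFDerivAt]
  refine (hasStrictFDerivAt_norm_sq x).hasFDerivAt.congr_fderiv ?_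
  ext v
  simp

variable {G : Type*} [NormedAddCommGroup G] [InnerProductSpace ℝ G] [CompleteSpace G]

theorem HasGradientAt.comp_continuousLinearMap {φ : G → ℝ} {φ' : G} (L : F →L[ℝ] G)
    (hφ : HasGradientAt φ φ' (L x)) :
    HasGradientAt (fun y => φ (L y)) (L.adjoint φ') x := by
  rw [hasGradientAt_iff_hasFDerivAt] at *
  refine (hφ.comp x L.hasFDerivAt).congr_fderiv ?_
  ext v
  simp [ContinuousLinearMap.adjoint_inner_left]

end GradientCalculus

section Euclidean

variable {ι κ : Type*} [Fintype ι] [DecidableEq ι]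

theorem HasGradientAt.comp_mulVec [Fintype κ] [DecidableEq κ]
    {φ : EuclideanSpace ℝ κ → ℝ} {φ' : EuclideanSpace ℝ κ}
    {x : EuclideanSpace ℝ ι} (A : Matrix κ ι ℝ)
    (hφ : HasGradientAt φ φ' (WithLp.toLp 2 (A *ᵥ x.ofLp))) :
    HasGradientAt (fun y : EuclideanSpace ℝ ι => φ (WithLp.toLp 2 (A *ᵥ y.ofLp)))
      (WithLp.toLp 2 (Aᵀ *ᵥ φ'.ofLp)) x := by
  have h := hφ.comp_continuousLinearMap (Matrix.toEuclideanLin A).toContinuousLinearMap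
  rwa [← LinearMap.adjoint_toContinuousLinearMap,
    ← Matrix.toEuclideanLin_conjTranspose_eq_adjoint] at h

theorem hasGradientAt_apply (i : ι) (u : EuclideanSpace ℝ ι) :
    HasGradientAt (fun v : EuclideanSpace ℝ ι => v i) (EuclideanSpace.single i 1) u := by
  simpa [EuclideanSpace.inner_single_left] using
    hasGradientAt_inner_right (EuclideanSpace.single i (1 : ℝ)) u

theorem hasGradientAt_mulVec_sq_apply (A : Matrix κ ι ℝ) (k : κ) (u : EuclideanSpace ℝ ι) :
    HasGradientAt (fun v : EuclideanSpace ℝ ι => (A *ᵥ fun i => v i ^ 2) k)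
      (WithLp.toLp 2 fun i => 2 * A k i * u i) u := by
  have h : HasGradientAt (fun v : EuclideanSpace ℝ ι => (A *ᵥ fun i => v i ^ 2) k)
      (∑ i, A k i • ((2 : ℕ) * u i ^ (2 - 1)) • EuclideanSpace.single i 1) u :=
    HasGradientAt.sum fun i _ =>
      ((hasDerivAt_pow 2 (u i)).comp_hasGradientAt u (hasGradientAt_apply i u)).const_mul (A k i)
  convert h using 1
  ext j
  simp only [Nat.cast_ofNat, Nat.add_one_sub_one, pow_one, WithLp.ofLp_sum, WithLp.ofLp_smul,
    PiLp.ofLp_single, Finset.sum_apply, Pi.smul_apply, Pi.single_apply, smul_eq_mul, mul_ite,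
    mul_one, mul_zero, Finset.sum_ite_eq, Finset.mem_univ, ↓reduceIte]
  ring

theorem hasDerivAt_log_one_add_exp (t : ℝ) :
    HasDerivAt (fun s => Real.log (1 + Real.exp s)) (sigmoid t) t := by
  convert ((Real.hasDerivAt_exp t).const_add 1).log (by positivity) using 1
  rw [sigmoid, Real.exp_neg]
  field_simp
  ring

theorem hasGradientAt_half_sum_log_one_add_exp [Fintype κ] (A : Matrix κ ι ℝ) (c : κ → ℝ)
    (u : EuclideanSpace ℝ ι) :
    HasGradientAt
      (fun v : EuclideanSpace ℝ ι =>
        1 / 2 * ∑ k, Real.log (1 + Real.exp ((A *ᵥ fun i => v i ^ 2) k + c k)))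
      (WithLp.toLp 2 (u.ofLp * Aᵀ *ᵥ fun k => sigmoid ((A *ᵥ fun i => u i ^ 2) k + c k)))
      u := by
  have h := (HasGradientAt.sum (s := Finset.univ) fun k _ =>
    (hasDerivAt_log_one_add_exp _).comp_hasGradientAt u
      ((hasGradientAt_mulVec_sq_apply A k u).add (hasGradientAt_const u (c k)))).const_mul (1 / 2)
  convert h using 1
  ext i
  simp only [mulVec, dotProduct, Pi.mul_apply, transpose_apply, Finset.mul_sum, one_div,
    add_zero, PiLp.smul_apply, WithLp.ofLp_sum, WithLp.ofLp_smul, Finset.sum_apply,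
    Pi.smul_apply, smul_eq_mul]
  exact Finset.sum_congr rfl fun k _ => by ring

end Euclidean

/-- For the covariance auto-encoder
`r(x) = (Wᶠ)ᵀ((Wᶠx) ⊙ (Wʰ)ᵀ σ(Wʰ(Wᶠx)² + b)) + a`, the vector field
`F(x) = r(x) - x` is the gradient of
`E(x) = (1/2) Σ_k log(1 + exp((Wʰ(Wᶠx)²)_k + b_k)) - ‖x‖²/2 + a·x`. -/
theorem covariance_ae_vector_field_is_gradient
    (Fn D M : ℕ)
    (WF : Matrix (Fin Fn) (Fin D) ℝ) (WH : Matrix (Fin M) (Fin Fn) ℝ)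
    (a : Fin D → ℝ) (b : Fin M → ℝ)
    (r : EuclideanSpace ℝ (Fin D) → (Fin D → ℝ))
    (hr : ∀ x, r x = WF.transpose.mulVec
      ((WF.mulVec (fun i => x i)) * WH.transpose.mulVec
        (fun k => sigmoid ((WH.mulVec (fun f => ((WF.mulVec (fun i => x i)) f) ^ 2)) k
          + b k))) + a)
    (E : EuclideanSpace ℝ (Fin D) → ℝ)
    (hE : ∀ x, E x = (1 / 2) * (∑ k, Real.log (1 + Real.exp
        ((WH.mulVec (fun f => ((WF.mulVec (fun i => x i)) f) ^ 2)) k + b k)))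
        - ‖x‖ ^ 2 / 2 + ∑ i, a i * x i) :
    ∀ x : EuclideanSpace ℝ (Fin D),
      HasGradientAt E (WithLp.toLp 2 (fun i => r x i - x i : Fin D → ℝ) :
        EuclideanSpace ℝ (Fin D)) x := by
  intro x
  have hgrad := (((hasGradientAt_half_sum_log_one_add_exp WH b _).comp_mulVec WF).sub
    ((hasGradientAt_norm_sq x).const_mul (1 / 2))).add
    (hasGradientAt_inner_right (WithLp.toLp 2 a) x)
  convert hgrad using 1
  · funext y
    simp [hE, div_eq_inv_mul, mul_comm, PiLp.inner_apply]
  · ext i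
    simp only [hr, Pi.add_apply, one_div, ne_eq, OfNat.ofNat_ne_zero, not_false_eq_true,
      inv_smul_smul₀, PiLp.add_apply, PiLp.sub_apply]
    ring
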